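/- Let n ≥ 1 and λ = 16·log(40n). Let r, r̄, η ∈ ℝ^n satisfy Φ(r) ≥ 8n, ‖r̄ − r‖_∞ ≤ 1/(48λ), and ‖η‖₂ ≤ 1/(60λ). Let ḡ = ∇Φ(r̄) (which is nonzero) and set r' = r − (1/(32λ))·ḡ/‖ḡ‖₂ + η. Then Φ(r') ≤ Φ(r) − √n/240. -/

import Mathlib

/-- The ℓ2 norm. -/
noncomputable def l2 {n : ℕ} (u : Fin n → ℝ) : ℝ := Real.sqrt (∑ i, (u i) ^ 2)

/-!
Work in the rescaled variables `x = λr`, `y = λr̄`, `e = λη`, where the step becomes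
`δ = -u/32 + e` with `u = sinh y / ‖sinh y‖₂`, so `‖δ‖₂ ≤ 1/32 + 1/60`. The bound
`|eᵗ - 1 - t| ≤ t²` gives `cosh (x + δ) ≤ cosh x + δ sinh x + δ² cosh x`, and with
`cosh x ≤ |sinh x| + 1` this yields `Φ(r') - Φ(r) ≤ ⟪sinh x, δ⟫ + (‖sinh x‖₂ + 1) ‖δ‖₂²`.
As `‖x - y‖_∞ ≤ 1/48`, the vectors `sinh x` and `sinh y` differ by at most
`(‖sinh y‖₂ + √n)/40` in `ℓ²`, so the first-order term is roughly
`-‖sinh x‖₂ (1/32 - 1/60)`, which beats the second-order term. Finally `Φ(r) ≥ 8n` forces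
`‖sinh x‖₂ ≥ 7√n`, because `cosh - 1 ≤ |sinh|` and `‖·‖₁ ≤ √n ‖·‖₂`.
-/

open Real

section L2
variable {n : ℕ}

theorem l2_eq_norm (u : Fin n → ℝ) : l2 u = ‖(WithLp.toLp 2 u : EuclideanSpace ℝ (Fin n))‖ := by
  simp [l2, EuclideanSpace.norm_eq]

theorem l2_nonneg (u : Fin n → ℝ) : 0 ≤ l2 u := sqrt_nonneg _

theorem sq_l2 (u : Fin n → ℝ) : l2 u ^ 2 = ∑ i, u i ^ 2 :=
  sq_sqrt (Finset.sum_nonneg fun _ _ => sq_nonneg _)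

theorem abs_le_l2 (u : Fin n → ℝ) (i : Fin n) : |u i| ≤ l2 u := by
  rw [← sqrt_sq_eq_abs]
  exact sqrt_le_sqrt (Finset.single_le_sum (fun j _ => sq_nonneg (u j)) (Finset.mem_univ i))

theorem l2_le_l2_of_abs_le {u v : Fin n → ℝ} (h : ∀ i, |u i| ≤ |v i|) : l2 u ≤ l2 v :=
  sqrt_le_sqrt (Finset.sum_le_sum fun i _ => sq_le_sq.mpr (h i))

theorem l2_abs (u : Fin n → ℝ) : l2 (fun i => |u i|) = l2 u := by
  simp [l2]

theorem l2_add_le (u v : Fin n → ℝ) : l2 (u + v) ≤ l2 u + l2 v := by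
  simpa only [l2_eq_norm, WithLp.toLp_add] using norm_add_le _ _

theorem l2_smul (c : ℝ) (u : Fin n → ℝ) : l2 (c • u) = |c| * l2 u := by
  rw [l2_eq_norm, l2_eq_norm, WithLp.toLp_smul, norm_smul, Real.norm_eq_abs]

theorem l2_const (c : ℝ) : l2 (fun _ : Fin n => c) = |c| * √n := by
  simp [l2, sqrt_mul (Nat.cast_nonneg n), sqrt_sq_eq_abs, mul_comm]

theorem abs_sum_mul_le_l2_mul_l2 (u v : Fin n → ℝ) : |∑ i, u i * v i| ≤ l2 u * l2 v := by
  rw [← sqrt_sq_eq_abs, l2, l2, ← sqrt_mul (Finset.sum_nonneg fun _ _ => sq_nonneg _)]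
  exact sqrt_le_sqrt (Finset.sum_mul_sq_le_sq_mul_sq _ _ _)

theorem sum_abs_le_sqrt_card_mul_l2 (u : Fin n → ℝ) : ∑ i, |u i| ≤ √n * l2 u := by
  simpa [l2_abs, l2_const, mul_comm] using
    (le_abs_self _).trans (abs_sum_mul_le_l2_mul_l2 (fun i => |u i|) fun _ => 1)

end L2

theorem Real.cosh_le_abs_sinh_add_one (x : ℝ) : cosh x ≤ |sinh x| + 1 := by
  nlinarith [cosh_sq x, one_le_cosh x, sq_abs (sinh x), abs_nonneg (sinh x)]

theorem Real.exp_le_one_add_add_sq {t : ℝ} (ht : |t| ≤ 1) : exp t ≤ 1 + t + t ^ 2 := by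
  linarith [le_abs_self (exp t - 1 - t), abs_exp_sub_one_sub_id_le ht]

theorem Real.cosh_add_le {x δ : ℝ} (hδ : |δ| ≤ 1) :
    cosh (x + δ) ≤ cosh x + δ * sinh x + δ ^ 2 * cosh x := by
  have hpos := exp_le_one_add_add_sq hδ
  have hneg := exp_le_one_add_add_sq (t := -δ) (by rwa [abs_neg])
  rw [cosh_eq, cosh_eq, sinh_eq, neg_add, exp_add, exp_add]
  nlinarith [mul_le_mul_of_nonneg_left hpos (exp_pos x).le,
    mul_le_mul_of_nonneg_left hneg (exp_pos (-x)).le]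

theorem Real.abs_sinh_add_sub_sinh_le {y d : ℝ} (hd : |d| ≤ 1) :
    |sinh (y + d) - sinh y| ≤ (|d| + d ^ 2) * cosh y := by
  have key : ∀ t : ℝ, |t| ≤ 1 → |exp t - 1| ≤ |t| + t ^ 2 := fun t ht => by
    calc |exp t - 1| = |(exp t - 1 - t) + t| := by ring_nf
      _ ≤ |exp t - 1 - t| + |t| := abs_add_le _ _
      _ ≤ t ^ 2 + |t| := by linarith [abs_exp_sub_one_sub_id_le ht]
      _ = |t| + t ^ 2 := by ring
  have hpos := key d hd
  have hneg := key (-d) (by rwa [abs_neg])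
  rw [abs_neg, neg_sq] at hneg
  have hsplit : sinh (y + d) - sinh y = (exp y * (exp d - 1) - exp (-y) * (exp (-d) - 1)) / 2 := by
    rw [sinh_eq, sinh_eq, neg_add, exp_add, exp_add]; ring
  rw [hsplit, cosh_eq, abs_div, abs_two]
  calc |exp y * (exp d - 1) - exp (-y) * (exp (-d) - 1)| / 2
      ≤ (exp y * |exp d - 1| + exp (-y) * |exp (-d) - 1|) / 2 := by
        gcongr
        refine (abs_sub _ _).trans ?_
        rw [abs_mul, abs_mul, abs_of_pos (exp_pos y), abs_of_pos (exp_pos (-y))]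
    _ ≤ (exp y * (|d| + d ^ 2) + exp (-y) * (|d| + d ^ 2)) / 2 := by gcongr
    _ = (|d| + d ^ 2) * ((exp y + exp (-y)) / 2) := by ring

section Potential
variable {n : ℕ}

theorem sum_cosh_sub_card_le (x : Fin n → ℝ) :
    ∑ i, cosh (x i) - n ≤ √n * l2 (fun i => sinh (x i)) := by
  have hpt : ∀ i, cosh (x i) - 1 ≤ |sinh (x i)| := fun i => by
    linarith [cosh_le_abs_sinh_add_one (x i)]
  calc ∑ i, cosh (x i) - n = ∑ i, (cosh (x i) - 1) := by simp [Finset.sum_sub_distrib]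
    _ ≤ ∑ i, |sinh (x i)| := Finset.sum_le_sum fun i _ => hpt i
    _ ≤ √n * l2 (fun i => sinh (x i)) := sum_abs_le_sqrt_card_mul_l2 _

theorem l2_sinh_sub_sinh_le {x y : Fin n → ℝ} (hxy : ∀ i, |x i - y i| ≤ 1 / 48) :
    l2 (fun i => sinh (x i) - sinh (y i)) ≤ (l2 (fun i => sinh (y i)) + √n) / 40 := by
  have hpt : ∀ i, |sinh (x i) - sinh (y i)| ≤ (|sinh (y i)| + 1) / 40 := fun i => by
    have hd := hxy i
    have hdiff := abs_sinh_add_sub_sinh_le (y := y i) (hd.trans (by norm_num))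
    rw [add_sub_cancel] at hdiff
    have hsq : (x i - y i) ^ 2 ≤ (1 / 48) ^ 2 := by
      rw [← sq_abs]; gcongr
    calc |sinh (x i) - sinh (y i)| ≤ (|x i - y i| + (x i - y i) ^ 2) * cosh (y i) := hdiff
      _ ≤ (1 / 40) * (|sinh (y i)| + 1) := by
        gcongr
        · linarith
        · exact cosh_le_abs_sinh_add_one _
      _ = (|sinh (y i)| + 1) / 40 := by ring
  calc l2 (fun i => sinh (x i) - sinh (y i))
      ≤ l2 ((1 / 40 : ℝ) • ((fun i => |sinh (y i)|) + fun _ => 1)) :=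
        l2_le_l2_of_abs_le fun i => by
          simpa [abs_of_nonneg (by positivity : 0 ≤ |sinh (y i)| + 1), div_eq_inv_mul]
            using hpt i
    _ ≤ (1 / 40) * (l2 (fun i => |sinh (y i)|) + l2 fun _ : Fin n => (1 : ℝ)) := by
        rw [l2_smul, abs_of_pos (by norm_num)]
        gcongr
        exact l2_add_le _ _
    _ = (l2 (fun i => sinh (y i)) + √n) / 40 := by
        rw [l2_abs, l2_const, abs_one, one_mul]; ring

theorem sum_cosh_add_le (x δ : Fin n → ℝ) (hδ : l2 δ ≤ 1) :
    ∑ i, cosh (x i + δ i) ≤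
      ∑ i, cosh (x i) + ∑ i, sinh (x i) * δ i + (l2 (fun i => sinh (x i)) + 1) * l2 δ ^ 2 := by
  have hpt : ∀ i, cosh (x i + δ i) ≤
      cosh (x i) + sinh (x i) * δ i + (l2 (fun i => sinh (x i)) + 1) * δ i ^ 2 := fun i => by
    have hcosh : cosh (x i) ≤ l2 (fun i => sinh (x i)) + 1 :=
      (cosh_le_abs_sinh_add_one _).trans
        (by linarith [abs_le_l2 (fun i => sinh (x i)) i])
    have := cosh_add_le (x := x i) ((abs_le_l2 δ i).trans hδ)
    nlinarith [sq_nonneg (δ i)]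
  calc ∑ i, cosh (x i + δ i)
      ≤ ∑ i, (cosh (x i) + sinh (x i) * δ i + (l2 (fun i => sinh (x i)) + 1) * δ i ^ 2) :=
        Finset.sum_le_sum fun i _ => hpt i
    _ = _ := by
        rw [Finset.sum_add_distrib, Finset.sum_add_distrib, ← Finset.mul_sum, sq_l2]

theorem sum_mul_smul_add_le (s e : Fin n → ℝ) {v : Fin n → ℝ} (hv : 0 < l2 v) {c : ℝ}
    (hc : 0 ≤ c) :
    ∑ i, s i * ((-(c / l2 v)) • v + e) i ≤ -c * (l2 v - l2 (s - v)) + l2 s * l2 e := by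
  have hcross : (l2 v - l2 (s - v)) * l2 v ≤ ∑ i, s i * v i := by
    have hdiff := (abs_le.mp (abs_sum_mul_le_l2_mul_l2 (s - v) v)).1
    have hsplit : ∑ i, s i * v i = ∑ i, (s - v) i * v i + l2 v ^ 2 := by
      rw [sq_l2, ← Finset.sum_add_distrib]
      exact Finset.sum_congr rfl fun i _ => by rw [Pi.sub_apply]; ring
    nlinarith
  have hsplit : ∑ i, s i * ((-(c / l2 v)) • v + e) i =
      -(c / l2 v) * ∑ i, s i * v i + ∑ i, s i * e i := by
    rw [Finset.mul_sum, ← Finset.sum_add_distrib]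
    exact Finset.sum_congr rfl fun i _ => by
      simp only [Pi.add_apply, Pi.smul_apply, smul_eq_mul]; ring
  have hfirst : -(c / l2 v) * ∑ i, s i * v i ≤ -c * (l2 v - l2 (s - v)) :=
    calc -(c / l2 v) * ∑ i, s i * v i ≤ -(c / l2 v) * ((l2 v - l2 (s - v)) * l2 v) :=
          mul_le_mul_of_nonpos_left hcross (neg_nonpos.mpr (by positivity))
      _ = -c * (l2 v - l2 (s - v)) := by field_simp
  rw [hsplit]
  linarith [(le_abs_self _).trans (abs_sum_mul_le_l2_mul_l2 s e)]

theorem sum_cosh_descent_step (hn : 1 ≤ n) {x y e : Fin n → ℝ}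
    (hΦ : 8 * n ≤ ∑ i, cosh (x i)) (hxy : ∀ i, |y i - x i| ≤ 1 / 48) (he : l2 e ≤ 1 / 60) :
    0 < l2 (fun i => sinh (y i)) ∧
      ∑ i, cosh (x i - 1 / 32 * (sinh (y i) / l2 (fun i => sinh (y i))) + e i) ≤
        ∑ i, cosh (x i) - √n / 240 := by
  set s : Fin n → ℝ := fun i => sinh (x i)
  set sb : Fin n → ℝ := fun i => sinh (y i)
  set S := l2 s
  set T := l2 sb
  set W := l2 (s - sb)
  have hsqrt : 1 ≤ √n := one_le_sqrt.mpr (by exact_mod_cast hn)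
  have hS : 7 * √n ≤ S := by
    refine le_of_mul_le_mul_left ?_ (by positivity : 0 < √n)
    have := sum_cosh_sub_card_le x
    nlinarith [mul_self_sqrt (Nat.cast_nonneg n : (0 : ℝ) ≤ n)]
  have hW : W ≤ (T + √n) / 40 :=
    l2_sinh_sub_sinh_le fun i => by rw [abs_sub_comm]; exact hxy i
  have hST : S ≤ T + W := by simpa using l2_add_le sb (s - sb)
  have hT : 0 < T := by linarith
  refine ⟨hT, ?_⟩
  set δ : Fin n → ℝ := (-(1 / 32 / T)) • sb + e
  have hδ : l2 δ ≤ 23 / 480 := by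
    calc l2 δ ≤ |-(1 / 32 / T)| * T + l2 e := by
          rw [← l2_smul]; exact l2_add_le _ _
      _ ≤ 1 / 32 + 1 / 60 := by
          rw [abs_neg, abs_of_pos (by positivity), div_mul_cancel₀ _ hT.ne']
          linarith
      _ = 23 / 480 := by norm_num
  have hfirst : ∑ i, s i * δ i ≤ -(1 / 32) * (T - W) + S / 60 := by
    have := sum_mul_smul_add_le s e hT (by norm_num : (0 : ℝ) ≤ 1 / 32)
    nlinarith [mul_le_mul_of_nonneg_left he (l2_nonneg s)]
  have hsecond : (S + 1) * l2 δ ^ 2 ≤ (S + 1) * (23 / 480) ^ 2 :=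
    mul_le_mul_of_nonneg_left (pow_le_pow_left₀ (l2_nonneg δ) hδ 2) (by linarith)
  have htaylor := sum_cosh_add_le x δ (by linarith)
  have hstep : ∀ i, x i - 1 / 32 * (sb i / T) + e i = x i + δ i := fun i => by
    simp only [δ, Pi.add_apply, Pi.smul_apply, smul_eq_mul]; ring
  calc ∑ i, cosh (x i - 1 / 32 * (sb i / T) + e i) = ∑ i, cosh (x i + δ i) :=
        Finset.sum_congr rfl fun i _ => by rw [hstep i]
    -- `T ≥ (40 S - √n) / 41` and `S ≥ 7 √n`: the gain `39 T / 1280` beats `S / 60 + (S + 1) ‖δ‖²`.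
    _ ≤ ∑ i, cosh (x i) - √n / 240 := by linarith

end Potential

/-- Potential decrease: with `λ = 16 log(40n)`, if `Φ(r) ≥ 8n`, `‖r̄ − r‖_∞ ≤ 1/(48λ)`,
`‖η‖₂ ≤ 1/(60λ)`, `ḡ = ∇Φ(r̄)` (which is nonzero) and
`r' = r − (1/(32λ)) ḡ/‖ḡ‖₂ + η`, then `Φ(r') ≤ Φ(r) − √n/240`. -/
theorem potential_decrease {n : ℕ} (hn : 1 ≤ n)
    (lam : ℝ) (hlam : lam = 16 * Real.log (40 * n))
    (r rb η : Fin n → ℝ)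
    (hΦ : (8 * n : ℝ) ≤ ∑ i, Real.cosh (lam * r i))
    (hrb : ∀ i, |rb i - r i| ≤ 1 / (48 * lam))
    (hη : l2 η ≤ 1 / (60 * lam))
    (gb : Fin n → ℝ) (hgb : gb = fun i => lam * Real.sinh (lam * rb i))
    (r' : Fin n → ℝ)
    (hr' : r' = fun i => r i - (1 / (32 * lam)) * (gb i / l2 gb) + η i) :
    gb ≠ 0 ∧
    ∑ i, Real.cosh (lam * r' i) ≤
      (∑ i, Real.cosh (lam * r i)) - Real.sqrt n / 240 := by
  have hlam0 : 0 < lam := by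
    have : (1 : ℝ) < 40 * n := by linarith [(Nat.one_le_cast.mpr hn : (1 : ℝ) ≤ n)]
    rw [hlam]
    exact mul_pos (by norm_num) (Real.log_pos this)
  have hxy : ∀ i, |lam * rb i - lam * r i| ≤ 1 / 48 := fun i => by
    rw [← mul_sub, abs_mul, abs_of_pos hlam0]
    calc lam * |rb i - r i| ≤ lam * (1 / (48 * lam)) := by gcongr; exact hrb i
      _ = 1 / 48 := by field_simp
  have he : l2 (lam • η) ≤ 1 / 60 := by
    rw [l2_smul, abs_of_pos hlam0]
    calc lam * l2 η ≤ lam * (1 / (60 * lam)) := by gcongr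
      _ = 1 / 60 := by field_simp
  obtain ⟨hT, hdescent⟩ := sum_cosh_descent_step hn hΦ hxy he
  have hl2 : l2 gb = lam * l2 (fun i => sinh (lam * rb i)) := by
    rw [hgb, show (fun i => lam * sinh (lam * rb i)) = lam • fun i => sinh (lam * rb i) from rfl,
      l2_smul, abs_of_pos hlam0]
  refine ⟨fun h => ?_, ?_⟩
  · have : l2 gb = 0 := by simp [h, l2]
    nlinarith
  · convert hdescent using 3 with i
    rw [hr', hl2, hgb]
    simp only [Pi.smul_apply, smul_eq_mul]
    field_simp
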